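/- Let G = (V, E) be a hedgegraph with hedgegraph polymatroid f. A subset Q ⊆ E is a quotient of f (i.e., Q = E \ span(S) for some S ⊆ E, where span(S) = {e : f(S ∪ {e}) = f(S)}) if and only if Q = δ(P) for some partition P of V. -/

import Mathlib

open Finset

attribute [local instance] Classical.propDecidable

noncomputable section

variable {V E : Type*}

/-- The simple graph on `V` induced by the hyperedges of the hedges in `A`. -/
def hgGraph (hedge : E → Finset (Finset V)) (A : Finset E) : SimpleGraph V where
  Adj u v := u ≠ v ∧ ∃ e ∈ A, ∃ h ∈ hedge e, u ∈ h ∧ v ∈ h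
  symm := by
    constructor
    rintro u v ⟨hne, e, he, h, hh, hu, hv⟩
    exact ⟨hne.symm, e, he, h, hh, hv, hu⟩
  loopless := by constructor; rintro u ⟨hne, -⟩; exact hne rfl

/-- Number of connected components of the sub-hedgegraph `(V, A)`. -/
def comps (hedge : E → Finset (Finset V)) (A : Finset E) : ℕ :=
  Nat.card (hgGraph hedge A).ConnectedComponent

/-- The hedgegraph polymatroid `f(A) = |V| - #Comps(V,A)`. -/
def fH [Fintype V] (hedge : E → Finset (Finset V)) (A : Finset E) : ℕ :=
  Fintype.card V - comps hedge A

/-- Hedges of `F` crossing the partition `P`: those containing a hyperedge intersecting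
at least two parts. -/
def hedgeCut [Fintype V] [DecidableEq V] (hedge : E → Finset (Finset V)) (F : Finset E)
    (P : Finpartition (univ : Finset V)) : Finset E :=
  F.filter fun e => ∃ h ∈ hedge e, ∃ p ∈ P.parts, ∃ q ∈ P.parts,
    p ≠ q ∧ (h ∩ p).Nonempty ∧ (h ∩ q).Nonempty

/-- The span of `S` in the hedgegraph polymatroid: hedges of zero marginal value. -/
def spanF [Fintype V] [DecidableEq V] [Fintype E] [DecidableEq E]
    (hedge : E → Finset (Finset V)) (S : Finset E) : Finset E :=
  univ.filter fun e => fH hedge (insert e S) = fH hedge S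

/-!
Adding a hedge `e` to `S` leaves the number of components unchanged exactly when every hyperedge
of `e` already lies inside one component of `(V, S)`. Hence the quotient `E \ span(S)` is the cut of
the partition of `V` into components of `(V, S)`. Conversely, the hedges not cut by a partition `P`
never join two parts, so their components refine `P`; thus `span(E \ δ(P)) = E \ δ(P)`.
-/

namespace SimpleGraph

variable {G G' : SimpleGraph V}

lemma reachable_of_forall_adj_reachable (h : ∀ u v, G'.Adj u v → G.Reachable u v) {u v : V}
    (huv : G'.Reachable u v) : G.Reachable u v := by
  rw [reachable_iff_reflTransGen] at huv ⊢
  exact Relation.ReflTransGen.lift' id (fun a b hab => (reachable_iff_reflTransGen a b).1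
    (h a b hab)) _ _ huv

theorem card_connectedComponent_eq_iff_of_le [Finite V] (hle : G ≤ G') :
    Nat.card G'.ConnectedComponent = Nat.card G.ConnectedComponent ↔
      ∀ u v, G'.Adj u v → G.Reachable u v := by
  set φ := ConnectedComponent.map (Hom.ofLE hle)
  have hsurj : φ.Surjective := ConnectedComponent.surjective_map_ofLE hle
  rw [eq_comm, ← Nat.bijective_iff_surjective_and_card φ |>.trans (and_iff_right hsurj),
    Function.Bijective, and_iff_left hsurj]
  constructor
  · intro hinj u v huv
    exact ConnectedComponent.exact (hinj (ConnectedComponent.sound huv.reachable))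
  · intro h c d hcd
    induction c using ConnectedComponent.ind
    induction d using ConnectedComponent.ind
    exact ConnectedComponent.sound
      (reachable_of_forall_adj_reachable h (ConnectedComponent.exact hcd))

end SimpleGraph

namespace Finpartition

variable {α : Type*} [Fintype α] [DecidableEq α]

lemma part_ofSetoid_eq_part_iff {s : Setoid α} [DecidableRel s.r] {a b : α} :
    (ofSetoid s).part a = (ofSetoid s).part b ↔ s a b := by
  rw [← (ofSetoid s).mem_part_iff_part_eq_part (mem_univ a) (mem_univ b),
    mem_part_ofSetoid_iff_rel]
  exact ⟨s.symm, s.symm⟩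

end Finpartition

section Hedgegraph

variable (hedge : E → Finset (Finset V))

lemma hgGraph_mono {A B : Finset E} (hAB : A ⊆ B) : hgGraph hedge A ≤ hgGraph hedge B := by
  rintro u v ⟨hne, e, he, h, hh, hu, hv⟩
  exact ⟨hne, e, hAB he, h, hh, hu, hv⟩

lemma hgGraph_reachable_of_mem {A : Finset E} {e : E} {h : Finset V} {u v : V} (he : e ∈ A)
    (hh : h ∈ hedge e) (hu : u ∈ h) (hv : v ∈ h) : (hgGraph hedge A).Reachable u v := by
  by_cases huv : u = v
  · exact huv ▸ SimpleGraph.Reachable.refl u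
  · exact SimpleGraph.Adj.reachable ⟨huv, e, he, h, hh, hu, hv⟩

lemma comps_le_card [Fintype V] (A : Finset E) : comps hedge A ≤ Fintype.card V := by
  rw [comps, ← Nat.card_eq_fintype_card]
  exact Nat.card_le_card_of_surjective _ Quot.mk_surjective

lemma comps_insert_eq_iff [Finite V] [DecidableEq E] (S : Finset E) (e : E) :
    comps hedge (insert e S) = comps hedge S ↔
      ∀ h ∈ hedge e, ∀ u ∈ h, ∀ v ∈ h, (hgGraph hedge S).Reachable u v := by
  rw [comps, comps, SimpleGraph.card_connectedComponent_eq_iff_of_le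
    (hgGraph_mono hedge (subset_insert e S))]
  constructor
  · intro hadj h hh u hu v hv
    by_cases huv : u = v
    · exact huv ▸ SimpleGraph.Reachable.refl u
    · exact hadj u v ⟨huv, e, mem_insert_self e S, h, hh, hu, hv⟩
  · rintro hreach u v ⟨hne, e', he', h, hh, hu, hv⟩
    rcases mem_insert.1 he' with rfl | he'S
    · exact hreach h hh u hu v hv
    · exact hgGraph_reachable_of_mem hedge he'S hh hu hv

variable [Fintype V] [DecidableEq V]

lemma mem_hedgeCut_iff {F : Finset E} {P : Finpartition (univ : Finset V)} {e : E} :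
    e ∈ hedgeCut hedge F P ↔
      e ∈ F ∧ ∃ h ∈ hedge e, ∃ u ∈ h, ∃ v ∈ h, P.part u ≠ P.part v := by
  simp only [hedgeCut, mem_filter]
  refine and_congr_right fun _ => ⟨?_, ?_⟩
  · rintro ⟨h, hh, p, hp, q, hq, hpq, ⟨u, hu⟩, ⟨v, hv⟩⟩
    rw [mem_inter] at hu hv
    refine ⟨h, hh, u, hu.1, v, hv.1, ?_⟩
    rwa [P.part_eq_of_mem hp hu.2, P.part_eq_of_mem hq hv.2]
  · rintro ⟨h, hh, u, hu, v, hv, huv⟩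
    exact ⟨h, hh, P.part u, P.part_mem.2 (mem_univ u), P.part v, P.part_mem.2 (mem_univ v), huv,
      ⟨u, mem_inter.2 ⟨hu, P.mem_part (mem_univ u)⟩⟩, ⟨v, mem_inter.2 ⟨hv, P.mem_part (mem_univ v)⟩⟩⟩

variable [Fintype E]

lemma part_eq_of_reachable {P : Finpartition (univ : Finset V)} {S : Finset E}
    (hS : Disjoint S (hedgeCut hedge univ P)) {u v : V} (huv : (hgGraph hedge S).Reachable u v) :
    P.part u = P.part v := by
  rw [SimpleGraph.reachable_iff_reflTransGen] at huv
  induction huv with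
  | refl => rfl
  | tail _ hadj ih =>
    obtain ⟨-, e, he, h, hh, hx, hy⟩ := hadj
    have hnot : e ∉ hedgeCut hedge univ P := disjoint_left.1 hS he
    rw [mem_hedgeCut_iff] at hnot
    push Not at hnot
    exact ih.trans (hnot (mem_univ e) h hh _ hx _ hy)

variable [DecidableEq E]

lemma mem_spanF_iff (S : Finset E) (e : E) :
    e ∈ spanF hedge S ↔ ∀ h ∈ hedge e, ∀ u ∈ h, ∀ v ∈ h, (hgGraph hedge S).Reachable u v := by
  have h₁ := comps_le_card hedge (insert e S)
  have h₂ := comps_le_card hedge S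
  rw [← comps_insert_eq_iff, spanF, mem_filter]
  simp only [fH, mem_univ, true_and]
  omega

theorem sdiff_spanF_eq_hedgeCut (S : Finset E) :
    univ \ spanF hedge S =
      hedgeCut hedge univ (Finpartition.ofSetoid (hgGraph hedge S).reachableSetoid) := by
  ext e
  simp only [mem_sdiff, mem_spanF_iff, mem_hedgeCut_iff, ne_eq,
    Finpartition.part_ofSetoid_eq_part_iff, SimpleGraph.reachableSetoid, mem_univ, true_and,
    not_forall, exists_prop]

theorem spanF_sdiff_hedgeCut (P : Finpartition (univ : Finset V)) :
    spanF hedge (univ \ hedgeCut hedge univ P) = univ \ hedgeCut hedge univ P := by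
  ext e
  rw [mem_spanF_iff]
  constructor
  · intro hspan
    refine mem_sdiff.2 ⟨mem_univ e, fun hcut => ?_⟩
    obtain ⟨-, h, hh, u, hu, v, hv, huv⟩ := (mem_hedgeCut_iff hedge).1 hcut
    exact huv (part_eq_of_reachable hedge sdiff_disjoint (hspan h hh u hu v hv))
  · intro he h hh u hu v hv
    exact hgGraph_reachable_of_mem hedge he hh hu hv

end Hedgegraph

/-- A hedge set `Q` is a quotient of the hedgegraph polymatroid iff
`Q = δ(P)` for some partition `P` of `V`. -/
theorem quotient_iff_partition_cut [Fintype V] [DecidableEq V]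
    [Fintype E] [DecidableEq E] (hedge : E → Finset (Finset V)) (Q : Finset E) :
    (∃ S : Finset E, Q = (univ : Finset E) \ spanF hedge S) ↔
      ∃ P : Finpartition (univ : Finset V), Q = hedgeCut hedge univ P := by
  constructor
  · rintro ⟨S, rfl⟩
    exact ⟨_, sdiff_spanF_eq_hedgeCut hedge S⟩
  · rintro ⟨P, rfl⟩
    refine ⟨univ \ hedgeCut hedge univ P, ?_⟩
    rw [spanF_sdiff_hedgeCut, sdiff_sdiff_right_self, inf_eq_inter, univ_inter]

end
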